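/- Let w be a random vector in R^n with mean zero and covariance matrix Σ, and let a ∈ R^n, b ∈ R, T > 0, ε ∈ (0,1]. If there exist y ≥ 0 and λ with 0 ≤ λ ≤ T such that y² + aᵀΣa ≤ ε(T−λ)² and |b| ≤ y + λ, then for every probability distribution P with mean zero and covariance Σ, Pr_P[|aᵀw + b| ≤ T] ≥ 1 − ε. -/
import Mathlib

open MeasureTheory Matrix

/-- SOC sufficiency for the two-sided distributionally robust chance constraint:
if `y ≥ 0`, `0 ≤ λ ≤ T`, `y² + aᵀΣa ≤ ε (T - λ)²` and `|b| ≤ y + λ`, then every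
zero-mean distribution with covariance `Σ` satisfies `Pr[|aᵀw + b| ≤ T] ≥ 1 - ε`. -/
theorem stmt_0 {n : ℕ} (a : Fin n → ℝ) (b T ε : ℝ) (Sig : Matrix (Fin n) (Fin n) ℝ)
    (hT : 0 < T) (hε0 : 0 < ε) (hε1 : ε ≤ 1)
    (y lam : ℝ) (hy : 0 ≤ y) (hlam0 : 0 ≤ lam) (hlamT : lam ≤ T)
    (hsoc : y ^ 2 + a ⬝ᵥ (Sig *ᵥ a) ≤ ε * (T - lam) ^ 2)
    (hb : |b| ≤ y + lam)
    {Ω : Type*} [MeasurableSpace Ω] (μ : Measure Ω) [IsProbabilityMeasure μ]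
    (w : Ω → Fin n → ℝ) (hmeas : Measurable w)
    (hint : ∀ i, Integrable (fun ω => w ω i) μ)
    (hint2 : ∀ i j, Integrable (fun ω => w ω i * w ω j) μ)
    (hmean : ∀ i, ∫ ω, w ω i ∂μ = 0)
    (hcov : ∀ i j, ∫ ω, w ω i * w ω j ∂μ = Sig i j) :
    1 - ε ≤ (μ {ω | |a ⬝ᵥ w ω + b| ≤ T}).toReal := by
  classical
  -- measurability and integrability of s = aᵀw
  have hsm : Measurable fun ω => a ⬝ᵥ w ω := by
    simp only [dotProduct]
    exact Finset.measurable_sum _ fun i _ =>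
      measurable_const.mul ((measurable_pi_apply i).comp hmeas)
  have hsint : Integrable (fun ω => a ⬝ᵥ w ω) μ := by
    simp only [dotProduct]
    exact integrable_finset_sum _ fun i _ => (hint i).const_mul (a i)
  have hsmean : ∫ ω, a ⬝ᵥ w ω ∂μ = 0 := by
    simp only [dotProduct]
    rw [integral_finset_sum _ fun i _ => (hint i).const_mul (a i)]
    simp [integral_const_mul, hmean]
  have hsq : ∀ ω, (a ⬝ᵥ w ω) ^ 2 = ∑ i, ∑ j, (a i * a j) * (w ω i * w ω j) := by
    intro ω
    simp only [dotProduct]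
    rw [sq, Finset.sum_mul_sum]
    exact Finset.sum_congr rfl fun i _ => Finset.sum_congr rfl fun j _ => by ring
  have hs2int : Integrable (fun ω => (a ⬝ᵥ w ω) ^ 2) μ := by
    simp only [hsq]
    exact integrable_finset_sum _ fun i _ =>
      integrable_finset_sum _ fun j _ => (hint2 i j).const_mul _
  have hσ : ∫ ω, (a ⬝ᵥ w ω) ^ 2 ∂μ = a ⬝ᵥ (Sig *ᵥ a) := by
    simp only [hsq]
    rw [integral_finset_sum _ fun i _ =>
      integrable_finset_sum _ fun j _ => (hint2 i j).const_mul _]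
    have hrhs : a ⬝ᵥ (Sig *ᵥ a) = ∑ i, ∑ j, (a i * a j) * Sig i j := by
      simp only [dotProduct, mulVec, Finset.mul_sum]
      exact Finset.sum_congr rfl fun i _ => Finset.sum_congr rfl fun j _ => by ring
    rw [hrhs]
    refine Finset.sum_congr rfl fun i _ => ?_
    rw [integral_finset_sum _ fun j _ => (hint2 i j).const_mul _]
    refine Finset.sum_congr rfl fun j _ => ?_
    rw [integral_const_mul, hcov]
  have hσ0 : 0 ≤ a ⬝ᵥ (Sig *ᵥ a) := hσ ▸ integral_nonneg fun ω => sq_nonneg _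
  -- bad set
  set Bset : Set Ω := {ω | T < |a ⬝ᵥ w ω + b|} with hBdef
  have hBmeas : MeasurableSet Bset :=
    measurableSet_lt measurable_const (hsm.add_const b).abs
  have key : (μ Bset).toReal ≤ ε := by
    by_cases hlt : lam < T
    · -- nondegenerate case
      set m : ℝ := max (-lam) (min lam b) - b with hm
      have hmb : |m + b| ≤ lam := by
        simp only [hm, sub_add_cancel]
        rw [abs_le]
        exact ⟨le_max_left _ _, max_le (by linarith) (min_le_left _ _)⟩
      have hmy : |m| ≤ y := by
        rcases abs_le.mp hb with ⟨hb1, hb2⟩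
        rw [hm, abs_le]
        rcases le_total lam b with h | h <;> rcases le_total b (-lam) with h' | h' <;>
          simp [min_def, max_def, *] <;> constructor <;> linarith
      set r : ℝ := T - lam with hr
      have hr0 : 0 < r := by simp only [hr]; linarith
      have hfeq : (fun ω => (a ⬝ᵥ w ω - m) ^ 2)
          = fun ω => ((a ⬝ᵥ w ω) ^ 2 - (2 * m) * (a ⬝ᵥ w ω)) + m ^ 2 := by
        funext ω; ring
      have hfint : Integrable (fun ω => (a ⬝ᵥ w ω - m) ^ 2) μ := by
        rw [hfeq]
        exact (hs2int.sub (hsint.const_mul _)).add (integrable_const _)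
      have h1 : Integrable (fun ω => (a ⬝ᵥ w ω) ^ 2 - 2 * m * (a ⬝ᵥ w ω)) μ :=
        hs2int.sub (hsint.const_mul _)
      have hfval : ∫ ω, (a ⬝ᵥ w ω - m) ^ 2 ∂μ = a ⬝ᵥ (Sig *ᵥ a) + m ^ 2 := by
        rw [hfeq, integral_add h1 (integrable_const _),
          integral_sub hs2int (hsint.const_mul _), integral_const_mul, hσ, hsmean]
        simp
      have hsub : Bset ⊆ {ω | r ^ 2 ≤ (a ⬝ᵥ w ω - m) ^ 2} := by
        intro ω hω
        simp only [hBdef, Set.mem_setOf_eq] at hω ⊢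
        rcases abs_le.mp hmb with ⟨h1, h2⟩
        rcases lt_abs.mp hω with h | h
        · have h3 : r ≤ a ⬝ᵥ w ω - m := by simp only [hr]; linarith
          exact pow_le_pow_left₀ hr0.le h3 2
        · have h3 : r ≤ m - a ⬝ᵥ w ω := by simp only [hr]; linarith
          calc r ^ 2 ≤ (m - a ⬝ᵥ w ω) ^ 2 := pow_le_pow_left₀ hr0.le h3 2
            _ = (a ⬝ᵥ w ω - m) ^ 2 := by ring
      have markov := mul_meas_ge_le_integral_of_nonneg
        (ae_of_all μ fun ω => sq_nonneg (a ⬝ᵥ w ω - m)) hfint (r ^ 2)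
      have hmono : (μ Bset).toReal ≤ (μ {ω | r ^ 2 ≤ (a ⬝ᵥ w ω - m) ^ 2}).toReal :=
        ENNReal.toReal_mono (measure_ne_top μ _) (measure_mono hsub)
      have hm2 : m ^ 2 ≤ y ^ 2 := by
        calc m ^ 2 = |m| ^ 2 := (sq_abs m).symm
          _ ≤ y ^ 2 := pow_le_pow_left₀ (abs_nonneg m) hmy 2
      have hchain : r ^ 2 * (μ Bset).toReal ≤ r ^ 2 * ε := by
        calc r ^ 2 * (μ Bset).toReal
            ≤ r ^ 2 * (μ {ω | r ^ 2 ≤ (a ⬝ᵥ w ω - m) ^ 2}).toReal :=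
              mul_le_mul_of_nonneg_left hmono (sq_nonneg r)
          _ ≤ ∫ ω, (a ⬝ᵥ w ω - m) ^ 2 ∂μ := markov
          _ = a ⬝ᵥ (Sig *ᵥ a) + m ^ 2 := hfval
          _ ≤ ε * r ^ 2 := by linarith
          _ = r ^ 2 * ε := by ring
      exact le_of_mul_le_mul_left hchain (pow_pos hr0 2)
    · -- degenerate case lam = T
      have hlam : lam = T := le_antisymm hlamT (not_lt.mp hlt)
      have h0 : y ^ 2 + a ⬝ᵥ (Sig *ᵥ a) ≤ 0 := by
        have : ε * (T - lam) ^ 2 = 0 := by rw [hlam]; ring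
        linarith
      have hy0 : y = 0 := by nlinarith [sq_nonneg y]
      have hσz : ∫ ω, (a ⬝ᵥ w ω) ^ 2 ∂μ = 0 := by
        rw [hσ]; nlinarith [sq_nonneg y]
      have hae : ∀ᵐ ω ∂μ, (a ⬝ᵥ w ω) ^ 2 = 0 := by
        have := (integral_eq_zero_iff_of_nonneg (fun ω => sq_nonneg (a ⬝ᵥ w ω)) hs2int).mp hσz
        filter_upwards [this] with ω hω using hω
      have hbT : |b| ≤ T := by rw [← hlam]; linarith
      have hae2 : ∀ᵐ ω ∂μ, ω ∉ Bset := by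
        filter_upwards [hae] with ω hω
        have hs0 : a ⬝ᵥ w ω = 0 := by
          have := pow_eq_zero_iff (n := 2) (by norm_num) |>.mp hω
          exact this
        simp only [hBdef, Set.mem_setOf_eq, hs0, zero_add, not_lt]
        exact hbT
      have : μ Bset = 0 := by
        have h := ae_iff.mp hae2
        simpa using h
      simp [this]
      linarith
  -- conclude
  have hcomp : {ω | |a ⬝ᵥ w ω + b| ≤ T} = Bsetᶜ := by
    ext ω; simp [hBdef, not_lt]
  rw [hcomp, prob_compl_eq_one_sub hBmeas,
    ENNReal.toReal_sub_of_le prob_le_one (by simp), ENNReal.toReal_one]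
  linarith
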